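/- arXiv:1604.04655 — 2 statements merged into one kernel-verified Lean document; each statement's English description precedes it below -/
import Mathlib

section
/- Axiom (R7) (the second involution law) is independent of the remaining Tarski axioms: on a Boolean algebra with at least four elements with a chosen element 1' distinct from 0 and 1, define r;s = r if s=1' and r;s = 0 otherwise, and let converse be the identity function. Then (R1)-(R6), (R8)-(R10) hold but (R7) fails. -/
/-! The composition r;s = (r if s = 1' else 0) is right distributive over joins and associative
as soon as 1' ≠ 0, since every product vanishes unless its right factor is 1'. Axiom (R10)
holds because -(r;s) = 1' forces r;s ≠ 0 (as 1' ≠ 1), hence s = 1' and r = 0', so that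
r;-(r;s) = r = -s. Since converse is the identity, (R7) would make composition commutative,
but 1;1' = 1 while 1';1 = 0. -/

theorem huntington_identity {A : Type*} [BooleanAlgebra A] (r s : A) :
    (rᶜ ⊔ s)ᶜ ⊔ (rᶜ ⊔ sᶜ)ᶜ = r := by
  rw [compl_sup, compl_sup, compl_compl, compl_compl, ← inf_sup_left, sup_comm, sup_compl_eq_top,
    inf_top_eq]

namespace R7Independence

variable {A : Type*} [DecidableEq A]

def comp [Bot A] (e r s : A) : A := if s = e then r else ⊥

section Bot

variable [Bot A] {e : A}

theorem comp_self (r : A) : comp e r e = r := if_pos rfl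

theorem comp_of_ne {r s : A} (hs : s ≠ e) : comp e r s = ⊥ := if_neg hs

theorem comp_assoc (he0 : e ≠ ⊥) (r s t : A) :
    comp e r (comp e s t) = comp e (comp e r s) t := by
  by_cases ht : t = e
  · rw [ht, comp_self, comp_self]
  · rw [comp_of_ne ht, comp_of_ne ht, comp_of_ne he0.symm]

theorem comp_ne_comp_swap {r : A} (hre : r ≠ e) (hr0 : r ≠ ⊥) : comp e r e ≠ comp e e r := by
  rw [comp_self, comp_of_ne hre]
  exact hr0

end Bot

theorem sup_comp [SemilatticeSup A] [OrderBot A] {e : A} (r s t : A) :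
    comp e (r ⊔ s) t = comp e r t ⊔ comp e s t := by
  by_cases ht : t = e
  · rw [ht, comp_self, comp_self, comp_self]
  · rw [comp_of_ne ht, comp_of_ne ht, comp_of_ne ht, bot_sup_eq]

theorem comp_compl_comp_sup_compl [BooleanAlgebra A] {e : A} (he1 : e ≠ ⊤) (r s : A) :
    comp e r (comp e r s)ᶜ ⊔ sᶜ = sᶜ := by
  by_cases h : (comp e r s)ᶜ = e
  · have hs : s = e := by
      by_contra hs
      rw [comp_of_ne hs, compl_bot] at h
      exact he1 h.symm
    rw [hs, comp_self] at h
    rw [hs, comp_self, h, comp_self, ← h, compl_compl, sup_idem]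
  · rw [comp_of_ne h, bot_sup_eq]

end R7Independence

open R7Independence in
/-- Axiom (R7) (the second involution law) is independent of the remaining
Tarski axioms: on a Boolean algebra with at least four elements, with a chosen
element 1' distinct from 0 and 1 (so that 0, 1', -1', 1 are four distinct
elements), define r;s = r if s = 1' and r;s = 0 otherwise, and let converse be
the identity.  Then (R1)-(R6) and (R8)-(R10) hold but (R7) fails. -/
theorem R7_independent {A : Type*} [BooleanAlgebra A] [DecidableEq A]
    (e : A) (he0 : e ≠ ⊥) (he1 : e ≠ ⊤) :
    let mul : A → A → A := fun r s => if s = e then r else ⊥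
    (∀ r s : A, r ⊔ s = s ⊔ r) ∧
    (∀ r s t : A, r ⊔ (s ⊔ t) = (r ⊔ s) ⊔ t) ∧
    (∀ r s : A, (rᶜ ⊔ s)ᶜ ⊔ (rᶜ ⊔ sᶜ)ᶜ = r) ∧
    (∀ r s t : A, mul r (mul s t) = mul (mul r s) t) ∧
    (∀ r : A, mul r e = r) ∧
    (∀ r : A, id (id r) = r) ∧
    (∀ r s t : A, mul (r ⊔ s) t = mul r t ⊔ mul s t) ∧
    (∀ r s : A, id (r ⊔ s) = id r ⊔ id s) ∧
    (∀ r s : A, mul (id r) (mul r s)ᶜ ⊔ sᶜ = sᶜ) ∧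
    ¬ (∀ r s : A, id (mul r s) = mul (id s) (id r)) := by
  intro mul
  have htop0 : (⊤ : A) ≠ ⊥ := ne_bot_of_le_ne_bot he0 le_top
  exact ⟨sup_comm, fun r s t => (sup_assoc r s t).symm, huntington_identity,
    comp_assoc he0, comp_self, fun _ => rfl, sup_comp, fun _ _ => rfl,
    comp_compl_comp_sup_compl he1, fun h => comp_ne_comp_swap he1.symm htop0 (h ⊤ e)⟩
end

section
/- Axiom (R9) (the distributive law for converse) is independent of the remaining Tarski axioms: in the algebra A9 obtained from the complex algebra of Z/3Z by redefining converse to fix the singletons {1} and {2} and to interchange the doubletons {0,1} and {0,2} (fixing all other elements), and redefining relative multiplication by X;Y = X⁻¹∘Y whenever X is a singleton and Y a doubleton (where ∘ is complex multiplication in Z/3Z, all other products unchanged), axioms (R1)-(R8) and (R10) hold but (R9) fails, since ({0}+{2})⁻ = {0,1} ≠ {0,2} = {0}⁻+{2}⁻. -/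
/-- Complex multiplication in the complex algebra of the group Z/3Z. -/
def cmulZ (X Y : Set (ZMod 3)) : Set (ZMod 3) := {z | ∃ x ∈ X, ∃ y ∈ Y, z = x + y}

/-- Complex inverse in the complex algebra of the group Z/3Z. -/
def cinvZ (X : Set (ZMod 3)) : Set (ZMod 3) := {z | ∃ x ∈ X, z = -x}

/-- Converse in the algebra A9: it maps every element to itself, except that it
interchanges the two doubletons {0,1} and {0,2} (in particular it fixes the
singletons {1} and {2}). -/
noncomputable def convA9 (X : Set (ZMod 3)) : Set (ZMod 3) := by
  classical
  exact if X = {0, 1} then {0, 2} else if X = {0, 2} then {0, 1} else X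

/-- Relative multiplication in the algebra A9: X;Y = X⁻¹∘Y whenever X is a
singleton and Y a doubleton, and X;Y = X∘Y otherwise. -/
noncomputable def mulA9 (X Y : Set (ZMod 3)) : Set (ZMod 3) := by
  classical
  exact if (∃ a, X = {a}) ∧ (∃ a b, a ≠ b ∧ Y = {a, b}) then cmulZ (cinvZ X) Y
    else cmulZ X Y

/-!
A9 is finite: every subset of `ZMod 3` is the coercion of a `Finset`, and `convA9`, `mulA9` are
the coercions of computable operations on `Finset (ZMod 3)`. Each of (R4)-(R8) and (R10) is thereby
a finite family of decidable equalities, checked by `decide`. (R9) fails because the converse fixes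
the singletons {0} and {2} but not their union {0,2}.
-/

open Pointwise

theorem huntington {α : Type*} [BooleanAlgebra α] (x y : α) :
    (xᶜ ⊔ y)ᶜ ⊔ (xᶜ ⊔ yᶜ)ᶜ = x := by
  rw [compl_sup, compl_sup, compl_compl, compl_compl, sup_comm]
  exact sup_inf_inf_compl

theorem Set.forall_finset_coe {α : Type*} [Finite α] {P : Set α → Prop} :
    (∀ X, P X) ↔ ∀ s : Finset α, P s :=
  ⟨fun h s => h s, fun h X => by
    obtain ⟨s, rfl⟩ := X.toFinite.exists_finset_coe
    exact h s⟩

theorem cmulZ_eq_add (X Y : Set (ZMod 3)) : cmulZ X Y = X + Y := by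
  ext z
  simp [cmulZ, Set.mem_add, eq_comm]

theorem cinvZ_eq_neg (X : Set (ZMod 3)) : cinvZ X = -X := by
  ext z
  simp [cinvZ, eq_comm (a := z), neg_eq_iff_eq_neg]

namespace A9

def conv (s : Finset (ZMod 3)) : Finset (ZMod 3) :=
  if s = {0, 1} then {0, 2} else if s = {0, 2} then {0, 1} else s

def mul (s t : Finset (ZMod 3)) : Finset (ZMod 3) :=
  if s.card = 1 ∧ t.card = 2 then -s + t else s + t

end A9

theorem convA9_coe (s : Finset (ZMod 3)) : convA9 s = A9.conv s := by
  unfold convA9 A9.conv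
  simp only [Finset.coe_eq_pair]
  split_ifs <;> simp

theorem mulA9_coe (s t : Finset (ZMod 3)) : mulA9 s t = A9.mul s t := by
  unfold mulA9 A9.mul
  simp only [Finset.coe_eq_singleton, Finset.coe_eq_pair, ← Finset.card_eq_one,
    ← Finset.card_eq_two, cmulZ_eq_add, cinvZ_eq_neg]
  split_ifs <;> simp

theorem mulA9_assoc (X Y Z : Set (ZMod 3)) : mulA9 X (mulA9 Y Z) = mulA9 (mulA9 X Y) Z := by
  revert X Y Z
  simp only [Set.forall_finset_coe, mulA9_coe, Finset.coe_inj]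
  decide

theorem mulA9_singleton_zero (X : Set (ZMod 3)) : mulA9 X {0} = X := by
  revert X
  simp only [Set.forall_finset_coe, ← Finset.coe_singleton, mulA9_coe, Finset.coe_inj]
  decide

theorem convA9_convA9 (X : Set (ZMod 3)) : convA9 (convA9 X) = X := by
  revert X
  simp only [Set.forall_finset_coe, convA9_coe, Finset.coe_inj]
  decide

theorem convA9_mulA9 (X Y : Set (ZMod 3)) : convA9 (mulA9 X Y) = mulA9 (convA9 Y) (convA9 X) := by
  revert X Y
  simp only [Set.forall_finset_coe, mulA9_coe, convA9_coe, Finset.coe_inj]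
  decide

theorem union_mulA9 (X Y Z : Set (ZMod 3)) : mulA9 (X ∪ Y) Z = mulA9 X Z ∪ mulA9 Y Z := by
  revert X Y Z
  simp only [Set.forall_finset_coe, ← Finset.coe_union, mulA9_coe, Finset.coe_inj]
  decide

theorem mulA9_convA9_compl_mulA9_subset_compl (X Y : Set (ZMod 3)) :
    mulA9 (convA9 X) (mulA9 X Y)ᶜ ⊆ Yᶜ := by
  revert X Y
  simp only [Set.forall_finset_coe, mulA9_coe, convA9_coe, ← Finset.coe_compl,
    Finset.coe_subset]
  decide

theorem convA9_singleton (a : ZMod 3) : convA9 {a} = {a} := by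
  rw [← Finset.coe_singleton, convA9_coe, Finset.coe_inj]
  revert a
  decide

theorem convA9_pair_zero_two : convA9 {0, 2} = {0, 1} := by
  rw [← Finset.coe_pair, convA9_coe, ← Finset.coe_pair, Finset.coe_inj]
  decide

/-- Axiom (R9) (the distributive law for converse) is independent of the
remaining Tarski axioms: in the algebra A9 (union as +, set complement as -,
mulA9 as ;, convA9 as converse, {0} as 1'), axioms (R1)-(R8) and (R10) all
hold but (R9) fails, since ({0}+{2})⁻ = {0,1} ≠ {0,2} = {0}⁻+{2}⁻. -/
theorem R9_independent :
    (∀ X Y : Set (ZMod 3), X ∪ Y = Y ∪ X) ∧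
    (∀ X Y Z : Set (ZMod 3), X ∪ (Y ∪ Z) = (X ∪ Y) ∪ Z) ∧
    (∀ X Y : Set (ZMod 3), (Xᶜ ∪ Y)ᶜ ∪ (Xᶜ ∪ Yᶜ)ᶜ = X) ∧
    (∀ X Y Z : Set (ZMod 3), mulA9 X (mulA9 Y Z) = mulA9 (mulA9 X Y) Z) ∧
    (∀ X : Set (ZMod 3), mulA9 X {0} = X) ∧
    (∀ X : Set (ZMod 3), convA9 (convA9 X) = X) ∧
    (∀ X Y : Set (ZMod 3), convA9 (mulA9 X Y) = mulA9 (convA9 Y) (convA9 X)) ∧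
    (∀ X Y Z : Set (ZMod 3), mulA9 (X ∪ Y) Z = mulA9 X Z ∪ mulA9 Y Z) ∧
    (∀ X Y : Set (ZMod 3), mulA9 (convA9 X) (mulA9 X Y)ᶜ ∪ Yᶜ = Yᶜ) ∧
    ¬ (∀ X Y : Set (ZMod 3), convA9 (X ∪ Y) = convA9 X ∪ convA9 Y) ∧
    convA9 (({0} : Set (ZMod 3)) ∪ {2}) = {0, 1} ∧
    convA9 ({0} : Set (ZMod 3)) ∪ convA9 {2} = {0, 2} := by
  have conv_union : convA9 (({0} : Set (ZMod 3)) ∪ {2}) = {0, 1} := by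
    rw [Set.singleton_union, convA9_pair_zero_two]
  have union_conv : convA9 ({0} : Set (ZMod 3)) ∪ convA9 {2} = {0, 2} := by
    rw [convA9_singleton, convA9_singleton, Set.singleton_union]
  refine ⟨Set.union_comm, fun X Y Z => (Set.union_assoc X Y Z).symm, huntington, mulA9_assoc,
    mulA9_singleton_zero, convA9_convA9, convA9_mulA9, union_mulA9,
    fun X Y => Set.union_eq_right.2 (mulA9_convA9_compl_mulA9_subset_compl X Y),
    fun h => ?_, conv_union, union_conv⟩
  have pairs_eq : ({0, 1} : Set (ZMod 3)) = {0, 2} :=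
    conv_union.symm.trans ((h _ _).trans union_conv)
  rw [Set.pair_eq_pair_iff] at pairs_eq
  revert pairs_eq
  decide
end
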